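/- arXiv:1203.2640 — 6 statements merged into one kernel-verified Lean document; each statement's English description precedes it below -/
import Mathlib

section
/- Let d, m ≥ 1 be natural numbers and let σ = (Fin d) ⊕ (Fin m × Fin m) ⊕ Unit be a variable type, writing x_i (i ∈ Fin d), y_{rs} ((r,s) ∈ Fin m × Fin m) and t for the three kinds of variables. In MvPolynomial σ ℂ set F := (∏_{i ∈ Fin d} X(x_i)) − X(t) · det(Y), where Y is the m×m matrix whose (r,s)-entry is X(y_{rs}). Then for every point p : σ → ℂ with p(t) ≠ 0, the following are equivalent: (a) eval p F = 0 and eval p (pderiv v F) = 0 for every variable v ∈ σ; (b) there exist indices i ≠ i′ in Fin d with p(x_i) = p(x_{i′}) = 0, and the m×m complex matrix (p(y_{rs}))_{r,s} has rank A satisfying rank A + 2 ≤ m. -/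
/-!
The partial derivatives of `F = ∏ xᵢ - t · det Y` are `∏_{j ≠ i} xⱼ` in the direction `xᵢ`,
`-t · (adj Y)ₛᵣ` in the direction `y_{rs}` (Jacobi's formula) and `-det Y` in the direction `t`.
Since `t ≠ 0`, a singular point is one where `det Y = 0` and `adj Y = 0`, i.e. `rank Y ≤ m - 2`,
and where every product of all but one of the `xᵢ` vanishes, i.e. two of the `xᵢ` vanish.
-/

open MvPolynomial Matrix Finset Equiv Module Submodule

namespace Matrix

section Adjugate

variable {n A : Type*} [Fintype n] [DecidableEq n] [CommRing A]

theorem adjugate_apply_eq_sum_perm (M : Matrix n n A) (i j : n) :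
    M.adjugate j i = ∑ σ : Perm n,
      if σ j = i then Perm.sign σ • ∏ k ∈ univ.erase j, M (σ k) k else 0 := by
  rw [adjugate_apply, det_apply]
  refine sum_congr rfl fun σ _ => ?_
  split_ifs with h
  · rw [← mul_prod_erase univ _ (mem_univ j), h, updateRow_self, Pi.single_eq_same, one_mul]
    refine congrArg _ (prod_congr rfl fun k hk => ?_)
    rw [updateRow_ne (h ▸ σ.injective.ne (ne_of_mem_erase hk))]
  · refine smul_eq_zero_of_right _ (prod_eq_zero (mem_univ (σ.symm i)) ?_)
    rw [apply_symm_apply, updateRow_self, Pi.single_eq_of_ne]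
    rintro rfl
    exact h (σ.apply_symm_apply i)

end Adjugate

section Rank

variable {m n K : Type*} [Field K] [Fintype n]

theorem rank_updateRow_le [Finite m] [DecidableEq m] (A : Matrix m n K) (j : m) (w : n → K) :
    (A.updateRow j w).rank ≤ A.rank + 1 := by
  simp only [rank_eq_finrank_span_row]
  have hspan : span K (Set.range (A.updateRow j w).row) ≤
      span K (Set.range A.row) ⊔ span K {w} := by
    rw [span_le]
    rintro _ ⟨k, rfl⟩
    rcases eq_or_ne k j with rfl | hk
    · exact mem_sup_right (subset_span (by simp [row]))
    · exact mem_sup_left (subset_span ⟨k, by simp [row, updateRow_ne hk]⟩)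
  calc _ ≤ _ := finrank_mono hspan
    _ ≤ _ := finrank_add_le_finrank_add_finrank _ _
    _ ≤ _ := by grw [finrank_span_le_card ({w} : Set (n → K))]; simp

theorem rank_add_one_le_rank_updateRow [Finite m] [DecidableEq m] (A : Matrix m n K) {j : m}
    {w : n → K} (hj : A.row j ∈ span K (A.row '' (Set.univ \ {j})))
    (hw : w ∉ span K (Set.range A.row)) :
    A.rank + 1 ≤ (A.updateRow j w).rank := by
  simp only [rank_eq_finrank_span_row]
  rw [← finrank_sup_span_singleton hw]
  refine finrank_mono (sup_le (span_le.2 ?_) (span_le.2 ?_))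
  · have hrows : A.row '' (Set.univ \ {j}) ⊆ Set.range (A.updateRow j w).row := by
      rintro _ ⟨k, hk, rfl⟩
      exact ⟨k, updateRow_ne (by simpa using hk)⟩
    rintro _ ⟨k, rfl⟩
    rcases eq_or_ne k j with rfl | hk
    · exact span_mono hrows hj
    · exact subset_span (hrows ⟨k, by simpa using hk, rfl⟩)
  · exact Set.singleton_subset_iff.2 (subset_span ⟨j, updateRow_self⟩)

variable [DecidableEq n]

theorem rank_lt_card_iff_det_eq_zero (A : Matrix n n K) :
    A.rank < Fintype.card n ↔ A.det = 0 := by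
  refine ⟨fun h => by_contra fun hA => h.ne (rank_of_det_ne_zero hA), fun hA => ?_⟩
  refine A.rank_le_card_width.lt_of_ne fun h => ?_
  have hrows : LinearIndependent K A.row := by
    rw [linearIndependent_iff_card_eq_finrank_span, Set.finrank, ← rank_eq_finrank_span_row, h]
  exact (isUnit_iff_ne_zero.1 (A.isUnit_iff_isUnit_det.1
    (linearIndependent_rows_iff_isUnit.1 hrows))) hA

theorem det_updateRow_eq_zero_of_adjugate_eq_zero {A : Matrix n n K} (hA : A.adjugate = 0)
    (j : n) (w : n → K) : (A.updateRow j w).det = 0 := by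
  rw [← cramer_transpose_apply, cramer_eq_adjugate_mulVec, ← adjugate_transpose, hA,
    transpose_zero, zero_mulVec, Pi.zero_apply]

theorem rank_add_two_le_card_iff (A : Matrix n n K) :
    A.rank + 2 ≤ Fintype.card n ↔ A.det = 0 ∧ A.adjugate = 0 := by
  constructor
  · intro h
    refine ⟨(rank_lt_card_iff_det_eq_zero A).1 (by omega), ext fun i j => ?_⟩
    rw [adjugate_apply, zero_apply, ← rank_lt_card_iff_det_eq_zero]
    have := A.rank_updateRow_le j (Pi.single i 1)
    omega
  · rintro ⟨hdet, hadj⟩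
    -- Replacing a dependent row by a vector outside the row space raises the rank by one,
    -- and since `adj A = 0` the new matrix is still singular.
    obtain ⟨j, hj⟩ : ∃ j, A.row j ∈ span K (A.row '' (Set.univ \ {j})) := by
      have hdep : ¬ LinearIndependent K A.row := by
        rwa [linearIndependent_rows_iff_isUnit, isUnit_iff_isUnit_det, isUnit_iff_ne_zero,
          not_not]
      simpa [linearIndependent_iff_notMem_span] using hdep
    obtain ⟨w, hw⟩ : ∃ w, w ∉ span K (Set.range A.row) := by
      by_contra! htop
      have : A.rank = Fintype.card n := by
        rw [rank_eq_finrank_span_row, (eq_top_iff.2 fun w _ => htop w : span K _ = ⊤),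
          finrank_top, finrank_fintype_fun_eq_card]
      rw [← rank_lt_card_iff_det_eq_zero] at hdet
      omega
    have hlt := (rank_lt_card_iff_det_eq_zero _).2
      (det_updateRow_eq_zero_of_adjugate_eq_zero hadj j w)
    have := A.rank_add_one_le_rank_updateRow hj hw
    omega

end Rank

end Matrix

namespace Derivation

variable {R A M : Type*} [CommSemiring R]

theorem leibniz_prod [CommSemiring A] [Algebra R A] [AddCommMonoid M] [Module A M] [Module R M]
    {ι : Type*} [DecidableEq ι] (D : Derivation R A M) (s : Finset ι) (f : ι → A) :
    D (∏ i ∈ s, f i) = ∑ i ∈ s, (∏ j ∈ s.erase i, f j) • D (f i) := by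
  induction s using Finset.induction with
  | empty => simp
  | insert a s ha ih =>
    rw [prod_insert ha, leibniz, ih, sum_insert ha, erase_insert ha, smul_sum, add_comm]
    congr 1
    refine sum_congr rfl fun i hi => ?_
    rw [erase_insert_of_ne (ne_of_mem_of_not_mem hi ha).symm,
      prod_insert (fun h => ha (mem_of_mem_erase h)), mul_smul]

theorem leibniz_det [CommRing A] [Algebra R A] [AddCommGroup M] [Module A M] [Module R M]
    {n : Type*} [Fintype n] [DecidableEq n] (D : Derivation R A M) (X : Matrix n n A) :
    D X.det = ∑ i, ∑ j, X.adjugate j i • D (X i j) := by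
  simp only [det_apply, map_sum, adjugate_apply_eq_sum_perm, sum_smul, ite_smul, zero_smul]
  conv_rhs =>
    rw [Finset.sum_comm]
    enter [2, j]
    rw [Finset.sum_comm]
    simp only [sum_ite_eq, mem_univ, if_true]
  rw [Finset.sum_comm]
  refine sum_congr rfl fun σ _ => ?_
  rw [Units.smul_def, map_zsmul, leibniz_prod, Finset.smul_sum]
  simp only [Units.smul_def, smul_assoc]

end Derivation

theorem prod_eq_zero_and_forall_prod_erase_eq_zero_iff {ι M : Type*} [Fintype ι]
    [DecidableEq ι] [CommMonoidWithZero M] [Nontrivial M] [NoZeroDivisors M] (a : ι → M) :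
    (∏ i, a i = 0 ∧ ∀ i, ∏ j ∈ univ.erase i, a j = 0) ↔
      ∃ i i', i ≠ i' ∧ a i = 0 ∧ a i' = 0 := by
  constructor
  · rintro ⟨hprod, herase⟩
    obtain ⟨i, -, hi⟩ := prod_eq_zero_iff.1 hprod
    obtain ⟨i', hi'mem, hi'⟩ := prod_eq_zero_iff.1 (herase i)
    exact ⟨i', i, ne_of_mem_erase hi'mem, hi', hi⟩
  · rintro ⟨i, i', hne, hi, hi'⟩
    refine ⟨prod_eq_zero (mem_univ i) hi, fun k => ?_⟩
    rcases eq_or_ne k i with rfl | hk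
    · exact prod_eq_zero (mem_erase.2 ⟨hne.symm, mem_univ i'⟩) hi'
    · exact prod_eq_zero (mem_erase.2 ⟨hk.symm, mem_univ i⟩) hi

section ProductMinusTDet

variable {R : Type*} [CommRing R] {d m : ℕ}

local notation "𝕍" => Fin d ⊕ (Fin m × Fin m) ⊕ Unit

/-- For `p = X` this is the generic matrix `Y = (y_{rs})`; for a point `p` it is `Y(p)`. -/
def yMatrix {α : Type*} (p : 𝕍 → α) : Matrix (Fin m) (Fin m) α :=
  of fun r s => p (.inr (.inl (r, s)))

variable (R d m) in
noncomputable def productMinusTDet : MvPolynomial 𝕍 R :=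
  (∏ i, X (.inl i)) - X (.inr (.inr ())) * (yMatrix X).det

theorem map_eval_yMatrix (p : 𝕍 → R) : (yMatrix X).map (eval p) = yMatrix p := by
  ext; simp [yMatrix]

theorem eval_det_yMatrix (p : 𝕍 → R) : eval p (yMatrix X).det = (yMatrix p).det := by
  rw [RingHom.map_det, RingHom.mapMatrix_apply, map_eval_yMatrix]

theorem eval_adjugate_yMatrix (p : 𝕍 → R) (r s : Fin m) :
    eval p ((yMatrix X).adjugate r s) = (yMatrix p).adjugate r s := by
  rw [← map_eval_yMatrix p]
  exact congrFun₂ (RingHom.map_adjugate (eval p) (yMatrix X)) r s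

theorem eval_productMinusTDet (p : 𝕍 → R) :
    eval p (productMinusTDet R d m) =
      ∏ i, p (.inl i) - p (.inr (.inr ())) * (yMatrix p).det := by
  simp [productMinusTDet, eval_det_yMatrix]

theorem pderiv_x_productMinusTDet (k : Fin d) :
    pderiv (.inl k) (productMinusTDet R d m) = ∏ j ∈ univ.erase k, X (.inl j) := by
  simp [productMinusTDet, Derivation.leibniz_prod, Derivation.leibniz_det, pderiv_X,
    Pi.single_apply, yMatrix]

theorem pderiv_y_productMinusTDet (r s : Fin m) :
    pderiv (.inr (.inl (r, s))) (productMinusTDet R d m) =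
      -(X (.inr (.inr ())) * (yMatrix X).adjugate s r) := by
  simp [productMinusTDet, Derivation.leibniz_prod, Derivation.leibniz_det, pderiv_X,
    Pi.single_apply, yMatrix, ite_and]

theorem pderiv_t_productMinusTDet :
    pderiv (.inr (.inr ())) (productMinusTDet R d m) = -(yMatrix X).det := by
  simp [productMinusTDet, Derivation.leibniz_prod, Derivation.leibniz_det, pderiv_X, yMatrix]

end ProductMinusTDet

theorem singular_locus_of_product_eq_t_det_general
    (d m : ℕ)
    (F : MvPolynomial (Fin d ⊕ (Fin m × Fin m) ⊕ Unit) ℂ)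
    (hF : F = (∏ i : Fin d, X (Sum.inl i)) -
      X (Sum.inr (Sum.inr ())) *
        (Matrix.of fun r s : Fin m =>
          (X (Sum.inr (Sum.inl (r, s))) :
            MvPolynomial (Fin d ⊕ (Fin m × Fin m) ⊕ Unit) ℂ)).det)
    (p : (Fin d ⊕ (Fin m × Fin m) ⊕ Unit) → ℂ)
    (hp : p (Sum.inr (Sum.inr ())) ≠ 0) :
    (eval p F = 0 ∧ ∀ v, eval p (pderiv v F) = 0) ↔
      ((∃ i i' : Fin d, i ≠ i' ∧ p (Sum.inl i) = 0 ∧ p (Sum.inl i') = 0) ∧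
        (Matrix.of fun r s : Fin m => p (Sum.inr (Sum.inl (r, s)))).rank + 2 ≤ m) := by
  obtain rfl : F = productMinusTDet ℂ d m := hF
  change _ ↔ _ ∧ (yMatrix p).rank + 2 ≤ m
  have hrank := (yMatrix p).rank_add_two_le_card_iff
  rw [Fintype.card_fin] at hrank
  rw [← prod_eq_zero_and_forall_prod_erase_eq_zero_iff, hrank]
  simp only [Sum.forall, Prod.forall, Unique.forall_iff, PUnit.default_eq_unit,
    eval_productMinusTDet, pderiv_x_productMinusTDet, pderiv_y_productMinusTDet,
    pderiv_t_productMinusTDet, map_neg, map_mul, eval_X, map_prod, eval_adjugate_yMatrix,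
    eval_det_yMatrix, neg_eq_zero, mul_eq_zero, hp, false_or]
  constructor
  · rintro ⟨hF, hx, hy, hdet⟩
    exact ⟨⟨by simpa [hdet] using hF, hx⟩, hdet, ext fun s r => hy r s⟩
  · rintro ⟨⟨hprod, hx⟩, hdet, hadj⟩
    exact ⟨by simp [hprod, hdet], hx, fun r s => by simp [hadj], hdet⟩

/-- The singular locus of the hypersurface `(∏ xᵢ = t · det(y_{rs}))` away from
`(t = 0)`: it is the union over 2-element sets `{i, i'}` of the loci
`(rank (y_{rs}) ≤ m - 2) ∩ (xᵢ = x_{i'} = 0)`. -/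
theorem singular_locus_of_product_eq_t_det
    (d m : ℕ) (hd : 1 ≤ d) (hm : 1 ≤ m)
    (F : MvPolynomial (Fin d ⊕ (Fin m × Fin m) ⊕ Unit) ℂ)
    (hF : F = (∏ i : Fin d, X (Sum.inl i)) -
      X (Sum.inr (Sum.inr ())) *
        (Matrix.of fun r s : Fin m =>
          (X (Sum.inr (Sum.inl (r, s))) :
            MvPolynomial (Fin d ⊕ (Fin m × Fin m) ⊕ Unit) ℂ)).det)
    (p : (Fin d ⊕ (Fin m × Fin m) ⊕ Unit) → ℂ)
    (hp : p (Sum.inr (Sum.inr ())) ≠ 0) :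
    (eval p F = 0 ∧ ∀ v, eval p (pderiv v F) = 0) ↔
      ((∃ i i' : Fin d, i ≠ i' ∧ p (Sum.inl i) = 0 ∧ p (Sum.inl i') = 0) ∧
        (Matrix.of fun r s : Fin m => p (Sum.inr (Sum.inl (r, s)))).rank + 2 ≤ m) :=
  singular_locus_of_product_eq_t_det_general d m F hF p hp
end

section
/- Let A be a commutative ring, m ≥ 2, and σ a type of variables containing pairwise distinct distinguished elements x₁, x₂, t and y_{rs} for (r,s) ∈ Fin m × Fin m. Let φ be the unique A-algebra endomorphism of S = MvPolynomial σ A determined by φ(X x₂) = X x₂ · X x₁, φ(X y_{rs}) = X y_{rs} · X x₁ for all (r,s), and φ(X v) = X v for every other variable v. Let Y be the m×m matrix with entries X y_{rs}. Then for all L, R ∈ S with φ(L) = L and φ(R) = R: φ( X x₁ · X x₂ · L − X t · det Y · R ) = (X x₁)² · ( X x₂ · L − X t · (X x₁)^{m−2} · det Y · R ). -/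
open MvPolynomial

/-- The first-type chart of the blow-up of the center `(x₁ = x₂ = 0, y_{rs} = 0)` on the
hypersurface `x₁x₂·L = t·det(y_{rs})·R`: the total transform equals `x₁²` times the
proper transform, whose local equation is `x₂·L = t·x₁^{m-2}·det(y_{rs})·R`. -/
theorem blowup_det_first_chart
    {A : Type*} [CommRing A] {σ : Type*} (m : ℕ) (hm : 2 ≤ m)
    (x₁ x₂ t : σ) (y : Fin m × Fin m → σ)
    (hx₁x₂ : x₁ ≠ x₂) (hx₁t : x₁ ≠ t) (hx₂t : x₂ ≠ t)
    (hy : Function.Injective y)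
    (hyx : ∀ q, y q ≠ x₁ ∧ y q ≠ x₂ ∧ y q ≠ t)
    (φ : MvPolynomial σ A →ₐ[A] MvPolynomial σ A)
    (hφx₂ : φ (X x₂) = X x₂ * X x₁)
    (hφy : ∀ q, φ (X (y q)) = X (y q) * X x₁)
    (hφ : ∀ v, v ≠ x₂ → (∀ q, v ≠ y q) → φ (X v) = X v)
    (L R : MvPolynomial σ A) (hL : φ L = L) (hR : φ R = R) :
    φ (X x₁ * X x₂ * L -
        X t * (Matrix.of fun r s : Fin m => (X (y (r, s)) : MvPolynomial σ A)).det * R) =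
      (X x₁) ^ 2 * (X x₂ * L -
        X t * (X x₁) ^ (m - 2) *
          (Matrix.of fun r s : Fin m => (X (y (r, s)) : MvPolynomial σ A)).det * R) := by
  have hφx₁ : φ (X x₁) = X x₁ := hφ x₁ hx₁x₂ (fun q => (hyx q).1.symm)
  have hφt : φ (X t) = X t := hφ t (Ne.symm hx₂t) (fun q => ((hyx q).2.2).symm)
  set M : Matrix (Fin m) (Fin m) (MvPolynomial σ A) :=
    Matrix.of fun r s : Fin m => (X (y (r, s)) : MvPolynomial σ A) with hM
  have hdet : φ M.det = X x₁ ^ m * M.det := by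
    have h1 : φ M.det = (M.map φ).det := AlgHom.map_det φ M
    have h2 : M.map φ = (X x₁ : MvPolynomial σ A) • M := by
      ext r s
      simp [hM, Matrix.map_apply, hφy, mul_comm, Matrix.smul_apply, smul_eq_mul]
    rw [h1, h2, Matrix.det_smul, Fintype.card_fin]
  have hx : (X x₁ : MvPolynomial σ A) ^ m = X x₁ ^ 2 * X x₁ ^ (m - 2) := by
    rw [← pow_add]; congr 1; omega
  rw [map_sub, map_mul, map_mul, map_mul, map_mul, hφx₁, hφx₂, hφt, hL, hR, hdet, hx]
  ring
end

section
/- Let A be a commutative ring, m ≥ 2, and σ a type of variables containing pairwise distinct distinguished elements x₁, x₂, t and y_{rs} for (r,s) ∈ Fin m × Fin m; write ℓ = Fin.last (m−1) for the last index, so y_{ℓℓ} is the (m,m) variable. Let ψ be the unique A-algebra endomorphism of S = MvPolynomial σ A determined by ψ(X x₁) = X x₁ · X y_{ℓℓ}, ψ(X x₂) = X x₂ · X y_{ℓℓ}, ψ(X y_{rs}) = X y_{rs} · X y_{ℓℓ} for all (r,s) ≠ (ℓ,ℓ), ψ(X y_{ℓℓ}) = X y_{ℓℓ}, and ψ(X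 v) = X v for every other variable v. Let Y be the m×m matrix with entries X y_{rs}, and let Y″ be the (m−1)×(m−1) matrix with entries Y″ r s = X y_{r.castSucc, s.castSucc} − X y_{r.castSucc, ℓ} · X y_{ℓ, s.castSucc} for r, s ∈ Fin (m−1). Then for all L, R ∈ S with ψ(L) = L and ψ(R) = R: ψ( X x₁ · X x₂ · L − X t · det Y · R ) = (X y_{ℓℓ})² · ( X x₁ · X x₂ · L − X t · (X y_{ℓℓ})^{m−2} · det Y″ · R ). -/
open MvPolynomial

/-- The second-type chart of the blow-up of the center `(x₁ = x₂ = 0, y_{rs} = 0)` on the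
hypersurface `x₁x₂·L = t·det(y_{rs})·R`: the total transform equals `y_{mm}²` times the
proper transform, whose local equation is
`x₁x₂·L = t·y_{mm}^{m-2}·det(y_{rs} - y_{rm}y_{ms} : 1 ≤ r,s ≤ m-1)·R`.
Here `m = k + 1` with `k ≥ 1` (so `m ≥ 2`), and `ℓ = Fin.last k` is the last index. -/
theorem blowup_det_second_chart
    {A : Type*} [CommRing A] {σ : Type*} (k : ℕ) (hk : 1 ≤ k)
    (x₁ x₂ t : σ) (y : Fin (k + 1) × Fin (k + 1) → σ)
    (hx₁x₂ : x₁ ≠ x₂) (hx₁t : x₁ ≠ t) (hx₂t : x₂ ≠ t)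
    (hy : Function.Injective y)
    (hyx : ∀ q, y q ≠ x₁ ∧ y q ≠ x₂ ∧ y q ≠ t)
    (ψ : MvPolynomial σ A →ₐ[A] MvPolynomial σ A)
    (hψx₁ : ψ (X x₁) = X x₁ * X (y (Fin.last k, Fin.last k)))
    (hψx₂ : ψ (X x₂) = X x₂ * X (y (Fin.last k, Fin.last k)))
    (hψy : ∀ q, q ≠ (Fin.last k, Fin.last k) →
      ψ (X (y q)) = X (y q) * X (y (Fin.last k, Fin.last k)))
    (hψyℓ : ψ (X (y (Fin.last k, Fin.last k))) = X (y (Fin.last k, Fin.last k)))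
    (hψ : ∀ v, v ≠ x₁ → v ≠ x₂ → (∀ q, v ≠ y q) → ψ (X v) = X v)
    (L R : MvPolynomial σ A) (hL : ψ L = L) (hR : ψ R = R) :
    ψ (X x₁ * X x₂ * L -
        X t * (Matrix.of fun r s : Fin (k + 1) =>
          (X (y (r, s)) : MvPolynomial σ A)).det * R) =
      (X (y (Fin.last k, Fin.last k))) ^ 2 * (X x₁ * X x₂ * L -
        X t * (X (y (Fin.last k, Fin.last k))) ^ (k + 1 - 2) *
          (Matrix.of fun r s : Fin k =>
            (X (y (r.castSucc, s.castSucc)) : MvPolynomial σ A) -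
              X (y (r.castSucc, Fin.last k)) * X (y (Fin.last k, s.castSucc))).det * R) := by
  set Z : MvPolynomial σ A := X (y (Fin.last k, Fin.last k)) with hZ
  have hψt : ψ (X t) = X t :=
    hψ t (Ne.symm hx₁t) (Ne.symm hx₂t) fun q => (hyx q).2.2.symm
  -- the normalized matrix with pivot entry 1
  set M : Matrix (Fin (k+1)) (Fin (k+1)) (MvPolynomial σ A) :=
    Matrix.of (fun r s => if (r, s) = (Fin.last k, Fin.last k) then 1 else X (y (r, s)))
    with hM
  have hmap : (Matrix.of fun r s : Fin (k+1) =>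
      (X (y (r, s)) : MvPolynomial σ A)).map ψ = Z • M := by
    ext r s
    simp only [Matrix.map_apply, Matrix.smul_apply, Matrix.of_apply, smul_eq_mul, hM]
    by_cases h : (r, s) = (Fin.last k, Fin.last k)
    · rw [if_pos h, h, hψyℓ, mul_one]
    · rw [if_neg h, hψy (r, s) h]; ring
  have hsub : M.submatrix (finSumFinEquiv (m := k) (n := 1))
      (finSumFinEquiv (m := k) (n := 1)) =
      Matrix.fromBlocks
        (Matrix.of fun r s : Fin k => (X (y (r.castSucc, s.castSucc)) : MvPolynomial σ A))
        (Matrix.of fun (r : Fin k) (_ : Fin 1) => X (y (r.castSucc, Fin.last k)))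
        (Matrix.of fun (_ : Fin 1) (s : Fin k) => X (y (Fin.last k, s.castSucc)))
        1 := by
    have hlast : ∀ j : Fin 1, Fin.natAdd k j = Fin.last k := by
      intro j; fin_cases j; ext; simp
    have hcs : ∀ i : Fin k, Fin.castAdd 1 i = Fin.castSucc i := fun i => rfl
    ext (r | r) (s | s) <;>
      simp only [Matrix.submatrix_apply, finSumFinEquiv_apply_left,
        finSumFinEquiv_apply_right, hlast, hcs, Matrix.fromBlocks_apply₁₁,
        Matrix.fromBlocks_apply₁₂, Matrix.fromBlocks_apply₂₁, Matrix.fromBlocks_apply₂₂,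
        Matrix.of_apply, hM]
    · rw [if_neg]
      simp only [Prod.mk.injEq, not_and]
      intro h; exact absurd h (Fin.castSucc_lt_last r).ne
    · rw [if_neg]
      simp only [Prod.mk.injEq, not_and]
      intro h; exact absurd h (Fin.castSucc_lt_last r).ne
    · rw [if_neg]
      simp only [Prod.mk.injEq]
      rintro ⟨-, h⟩; exact absurd h (Fin.castSucc_lt_last s).ne
    · simp [Matrix.one_apply, Subsingleton.elim r s]
  have key : ψ (Matrix.of fun r s : Fin (k+1) =>
      (X (y (r, s)) : MvPolynomial σ A)).det =
      Z ^ (k+1) * (Matrix.of fun r s : Fin k =>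
        (X (y (r.castSucc, s.castSucc)) : MvPolynomial σ A) -
          X (y (r.castSucc, Fin.last k)) * X (y (Fin.last k, s.castSucc))).det := by
    rw [AlgHom.map_det, AlgHom.mapMatrix_apply, hmap, Matrix.det_smul]
    congr 1
    · simp
    rw [← Matrix.det_submatrix_equiv_self (finSumFinEquiv (m := k) (n := 1)) M, hsub,
      Matrix.det_fromBlocks_one₂₂]
    congr 1
    ext r s
    simp [Matrix.mul_apply, Fin.sum_univ_one]
  have hpow : (Z : MvPolynomial σ A) ^ (k+1) = Z ^ 2 * Z ^ (k + 1 - 2) := by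
    rw [← pow_add]; congr 1; omega
  rw [map_sub, map_mul, map_mul, map_mul, map_mul, hψx₁, hψx₂, hL, hψt, key, hR, hpow]
  ring
end

section
/- Let n ≥ 1 and 0 ≤ m ≤ n be natural numbers, and let A be an n×n complex matrix with rank A = n − m. In the polynomial ring MvPolynomial (Fin n × Fin n) ℂ, let P := det( M ), where M is the n×n matrix over this polynomial ring with entries M i j = C (A i j) + X (i,j). Then every monomial in the support of P has total degree ≥ m, and the support of P contains a monomial of total degree exactly m; that is, the minimal total degree of a monomial occurring in P equals m (the corank of A). -/
/-!
Over a field, `A = U * diagonal d * V` with `U`, `V` invertible, and the corank of `A` is the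
number of zeros of `d`. Then `det (A + X) = det U * det V * det (diagonal d + U⁻¹ X V⁻¹)`, and
since the entries of `U⁻¹ X V⁻¹` lie in the ideal `𝔪` of the variables, every term of the
Leibniz expansion has at least corank-many factors in `𝔪`: `det (A + X) ∈ 𝔪 ^ corank`.
Conversely, the substitution `X := U * diagonal (fun i => if d i = 0 then T else 0) * V` maps
`𝔪` into the ideal `(T)` of a single variable and turns `det (A + X)` into a nonzero multiple
of `T ^ corank`, which does not lie in `(T) ^ (corank + 1)`.
-/

open MvPolynomial Finset

namespace MvPolynomial

theorem aeval_mem_pow_idealOfVars {σ τ R : Type*} [CommSemiring R] {f : σ → MvPolynomial τ R}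
    (hf : ∀ s, f s ∈ idealOfVars τ R) {p : MvPolynomial σ R} {k : ℕ}
    (hp : p ∈ idealOfVars σ R ^ k) : aeval f p ∈ idealOfVars τ R ^ k := by
  have hmap : (idealOfVars σ R).map (aeval f) ≤ idealOfVars τ R := by
    rw [idealOfVars, Ideal.map_span, Ideal.span_le]
    rintro _ ⟨_, ⟨s, rfl⟩, rfl⟩
    simpa using hf s
  exact Ideal.pow_right_mono hmap k
    (Ideal.map_pow (aeval (R := R) f) _ k ▸ Ideal.mem_map_of_mem _ hp)

end MvPolynomial

namespace Matrix

variable {n R : Type*} [Fintype n] [CommRing R]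

theorem mul_mul_apply_mem {I : Ideal R} {Y : Matrix n n R} (hY : ∀ i j, Y i j ∈ I)
    (U V : Matrix n n R) (i j : n) : (U * Y * V) i j ∈ I := by
  simp only [mul_apply]
  exact I.sum_mem fun k _ => I.mul_mem_right _ (I.sum_mem fun l _ => I.mul_mem_left _ (hY l k))

theorem det_add_mem_pow_of_rows_eq_zero [DecidableEq n] {I : Ideal R} {D Y : Matrix n n R}
    {s : Finset n} (hD : ∀ i ∈ s, ∀ j, D i j = 0) (hY : ∀ i j, Y i j ∈ I) :
    (D + Y).det ∈ I ^ #s := by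
  rw [det_apply]
  refine Ideal.sum_mem _ fun σ _ => ?_
  rw [Units.smul_def]
  refine zsmul_mem ?_ _
  rw [← σ.symm.prod_comp, ← prod_mul_prod_compl s]
  refine Ideal.mul_mem_right _ _ ?_
  rw [← prod_const]
  refine Ideal.prod_mem_prod fun i hi => ?_
  simpa [hD i hi] using hY i (σ.symm i)

theorem det_mul_mul_add_mem_pow_of_rows_eq_zero [DecidableEq n] {I : Ideal R}
    {U V D Y : Matrix n n R} {s : Finset n} (hU : IsUnit U.det) (hV : IsUnit V.det)
    (hD : ∀ i ∈ s, ∀ j, D i j = 0) (hY : ∀ i j, Y i j ∈ I) :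
    (U * D * V + Y).det ∈ I ^ #s := by
  have hfactor : U * D * V + Y = U * (D + U⁻¹ * Y * V⁻¹) * V := by
    rw [Matrix.mul_add, Matrix.add_mul, ← Matrix.mul_assoc U, ← Matrix.mul_assoc U,
      mul_nonsing_inv _ hU, Matrix.one_mul, Matrix.mul_assoc Y, nonsing_inv_mul _ hV,
      Matrix.mul_one]
  rw [hfactor, det_mul, det_mul]
  exact Ideal.mul_mem_right _ _ (Ideal.mul_mem_left _ _
    (det_add_mem_pow_of_rows_eq_zero hD (mul_mul_apply_mem hY _ _)))

theorem isUnit_det_map_of_isUnit_det [DecidableEq n] {S : Type*} [CommRing S] (f : R →+* S)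
    {M : Matrix n n R} (hM : IsUnit M.det) : IsUnit (M.map f).det := by
  rw [← RingHom.mapMatrix_apply, ← RingHom.map_det]
  exact hM.map f

theorem aeval_det_map_C_add_mvPolynomialX [DecidableEq n] {S : Type*} [CommRing S]
    [Algebra R S] (M : Matrix n n R) (Y : Matrix n n S) :
    aeval (fun p : n × n => Y p.1 p.2) (M.map C + mvPolynomialX n n R).det =
      (M.map (algebraMap R S) + Y).det := by
  rw [AlgHom.map_det, map_add, mvPolynomialX_mapMatrix_aeval]
  congr 2
  ext i j
  simp only [AlgHom.mapMatrix_apply, map_apply, aeval_C]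

theorem det_map_C_add_mvPolynomialX_mem_pow_idealOfVars [DecidableEq n] {U V : Matrix n n R}
    (hU : IsUnit U.det) (hV : IsUnit V.det) {d : n → R} {s : Finset n}
    (hd : ∀ i ∈ s, d i = 0) :
    ((U * diagonal d * V).map C + mvPolynomialX n n R).det ∈ idealOfVars (n × n) R ^ #s := by
  rw [Matrix.map_mul, Matrix.map_mul, diagonal_map (map_zero _)]
  refine det_mul_mul_add_mem_pow_of_rows_eq_zero (isUnit_det_map_of_isUnit_det C hU)
    (isUnit_det_map_of_isUnit_det C hV) (fun i hi j => ?_)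
    fun i j => Ideal.subset_span ⟨(i, j), rfl⟩
  simp [diagonal_apply, hd i hi]

theorem det_map_C_add_mvPolynomialX_notMem_pow_idealOfVars [DecidableEq n] {K : Type*} [Field K]
    [DecidableEq K] {U V : Matrix n n K} (hU : IsUnit U.det) (hV : IsUnit V.det) (d : n → K) :
    ((U * diagonal d * V).map C + mvPolynomialX n n K).det ∉
      idealOfVars (n × n) K ^ (#{i | d i = 0} + 1) := by
  intro hmem
  let Δ : Matrix n n (MvPolynomial Unit K) := diagonal fun i => if d i = 0 then X () else 0
  have hΔ (i j : n) : Δ i j ∈ idealOfVars Unit K := by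
    simp only [Δ, diagonal_apply]
    split_ifs
    exacts [Ideal.subset_span ⟨(), rfl⟩, zero_mem _, zero_mem _]
  let Y : Matrix n n (MvPolynomial Unit K) := U.map C * Δ * V.map C
  have hsubst := aeval_mem_pow_idealOfVars (f := fun p : n × n => Y p.1 p.2)
    (fun p => mul_mul_apply_mem hΔ _ _ p.1 p.2) hmem
  have hfactor : (U * diagonal d * V).map (algebraMap K (MvPolynomial Unit K)) + Y =
        U.map C * diagonal (fun i => if d i = 0 then X () else C (d i)) * V.map C := by
    rw [algebraMap_eq, Matrix.map_mul, Matrix.map_mul, diagonal_map (map_zero _),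
      ← Matrix.add_mul, ← Matrix.mul_add, diagonal_add]
    congr with i
    split_ifs with h <;> simp [h]
  have hdet : (U.map C * diagonal (fun i => if d i = 0 then X () else C (d i)) * V.map C).det =
      monomial (Finsupp.single () #{i | d i = 0})
        (U.det * V.det * ∏ i ∈ {i | d i ≠ 0}, d i) := by
    rw [det_mul, det_mul, det_diagonal, prod_ite, prod_const, ← RingHom.mapMatrix_apply,
      ← RingHom.mapMatrix_apply, ← RingHom.map_det, ← RingHom.map_det, ← map_prod,
      ← C_mul_X_pow_eq_monomial]
    simp only [ne_eq, map_mul]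
    ring
  have hcoeff : U.det * V.det * ∏ i ∈ {i | d i ≠ 0}, d i ≠ 0 :=
    mul_ne_zero (mul_ne_zero hU.ne_zero hV.ne_zero)
      (prod_ne_zero_iff.2 fun i hi => (mem_filter.1 hi).2)
  rw [aeval_det_map_C_add_mvPolynomialX, hfactor, hdet,
    monomial_mem_pow_idealOfVars_iff _ _ hcoeff, Finsupp.degree_single] at hsubst
  omega

theorem det_map_C_add_mvPolynomialX_mem_pow_idealOfVars_iff [DecidableEq n] {K : Type*}
    [Field K] (A : Matrix n n K) (k : ℕ) :
    (A.map C + mvPolynomialX n n K).det ∈ idealOfVars (n × n) K ^ k ↔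
      k ≤ Fintype.card n - A.rank := by
  classical
  obtain ⟨L, L', d, hA⟩ := Pivot.exists_list_transvec_mul_diagonal_mul_list_transvec A
  set U := (L.map TransvectionStruct.toMatrix).prod
  set V := (L'.map TransvectionStruct.toMatrix).prod
  have hU : IsUnit U.det := by simp [U]
  have hV : IsUnit V.det := by simp [V]
  have hcorank : #{i | d i = 0} = Fintype.card n - A.rank := by
    rw [hA, rank_mul_eq_left_of_isUnit_det _ _ hV, rank_mul_eq_right_of_isUnit_det _ _ hU,
      rank_diagonal, Fintype.card_subtype_compl, Fintype.card_subtype,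
      Nat.sub_sub_self (card_le_univ _)]
  rw [← hcorank, hA]
  constructor
  · intro hk
    by_contra! hlt
    exact det_map_C_add_mvPolynomialX_notMem_pow_idealOfVars hU hV d
      (Ideal.pow_le_pow_right hlt hk)
  · intro hk
    exact Ideal.pow_le_pow_right hk
      (det_map_C_add_mvPolynomialX_mem_pow_idealOfVars hU hV fun i hi => (mem_filter.1 hi).2)

end Matrix

theorem multiplicity_det_eq_corank_general
    (n m : ℕ) (hm : m ≤ n)
    (A : Matrix (Fin n) (Fin n) ℂ) (hA : A.rank = n - m)
    (P : MvPolynomial (Fin n × Fin n) ℂ)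
    (hP : P = (Matrix.of fun i j : Fin n =>
      (C (A i j) + X (i, j) : MvPolynomial (Fin n × Fin n) ℂ)).det) :
    (∀ e ∈ P.support, m ≤ e.sum fun _ k => k) ∧
      ∃ e ∈ P.support, (e.sum fun _ k => k) = m := by
  have hmem (k : ℕ) : P ∈ idealOfVars (Fin n × Fin n) ℂ ^ k ↔ k ≤ m := by
    rw [show P = (A.map C + Matrix.mvPolynomialX (Fin n) (Fin n) ℂ).det from hP,
      Matrix.det_map_C_add_mvPolynomialX_mem_pow_idealOfVars_iff, Fintype.card_fin, hA,
      Nat.sub_sub_self hm]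
  have hlow := (mem_pow_idealOfVars_iff m P).1 ((hmem m).2 le_rfl)
  obtain ⟨e, he, hlt⟩ : ∃ e ∈ P.support, e.degree < m + 1 := by
    simpa [mem_pow_idealOfVars_iff] using (hmem (m + 1)).not.2 (Nat.not_succ_le_self m)
  exact ⟨hlow, e, he, le_antisymm (Nat.lt_succ_iff.1 hlt) (hlow e he)⟩

/-- The multiplicity of the determinant hypersurface `det H = 0` at a matrix point `A`
equals the corank of `A`: the minimal total degree of a monomial occurring in
`det (C (A i j) + X (i,j))` equals `m = n - rank A`. -/
theorem multiplicity_det_eq_corank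
    (n m : ℕ) (hn : 1 ≤ n) (hm : m ≤ n)
    (A : Matrix (Fin n) (Fin n) ℂ) (hA : A.rank = n - m)
    (P : MvPolynomial (Fin n × Fin n) ℂ)
    (hP : P = (Matrix.of fun i j : Fin n =>
      (C (A i j) + X (i, j) : MvPolynomial (Fin n × Fin n) ℂ)).det) :
    (∀ e ∈ P.support, m ≤ e.sum fun _ k => k) ∧
      ∃ e ∈ P.support, (e.sum fun _ k => k) = m :=
  multiplicity_det_eq_corank_general n m hm A hA P hP
end

section
/- Let A be a commutative ring, σ a type of variables, J ⊆ σ a subset, and j₀ ∈ J. Let I ⊆ MvPolynomial σ A be the ideal generated by the variables {X j : j ∈ J}, and let φ be the unique A-algebra endomorphism of MvPolynomial σ A determined by φ(X j) = X j · X j₀ for every j ∈ J with j ≠ j₀, and φ(X v) = X v for all other variables v (including v = j₀). Then for every natural number d and every f ∈ I^d, the element (X j₀)^d divides φ(f). -/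
open MvPolynomial

/-- The basic blow-up computation: if `f` vanishes to order at least `d` along the smooth
center `W = (x_j = 0 : j ∈ J)`, i.e. `f ∈ I^d` for `I` the ideal generated by the
variables in `J`, then in the chart of the blow-up of `W` given by `x_j = x'_j x'_{j₀}`,
the pullback of `f` is divisible by the `d`-th power of the exceptional coordinate. -/
theorem pow_exceptional_dvd_of_mem_pow
    {A : Type*} [CommRing A] {σ : Type*} (J : Set σ) (j₀ : σ) (hj₀ : j₀ ∈ J)
    (I : Ideal (MvPolynomial σ A))
    (hI : I = Ideal.span ((fun j => (X j : MvPolynomial σ A)) '' J))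
    (φ : MvPolynomial σ A →ₐ[A] MvPolynomial σ A)
    (hφJ : ∀ j ∈ J, j ≠ j₀ → φ (X j) = X j * X j₀)
    (hφ : ∀ v, v ∉ J ∨ v = j₀ → φ (X v) = X v)
    (d : ℕ) (f : MvPolynomial σ A) (hf : f ∈ I ^ d) :
    (X j₀ : MvPolynomial σ A) ^ d ∣ φ f := by
  have h1 : Ideal.map (φ : MvPolynomial σ A →+* MvPolynomial σ A) I ≤
      Ideal.span {X j₀} := by
    rw [hI, Ideal.map_span, Ideal.span_le]
    rintro _ ⟨_, ⟨j, hj, rfl⟩, rfl⟩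
    simp only [SetLike.mem_coe, Ideal.mem_span_singleton, RingHom.coe_coe]
    by_cases h : j = j₀
    · rw [hφ j (Or.inr h), h]
    · rw [hφJ j hj h]; exact Dvd.intro_left _ rfl
  have h2 : φ f ∈ Ideal.map (φ : MvPolynomial σ A →+* MvPolynomial σ A) (I ^ d) :=
    Ideal.mem_map_of_mem _ hf
  rw [Ideal.map_pow] at h2
  have h3 := Ideal.pow_right_mono h1 d h2
  rwa [Ideal.span_singleton_pow, Ideal.mem_span_singleton] at h3
end

section
/- Let m ≥ 2 and let σ = Fin 2 ⊕ Unit ⊕ (Fin m × Fin m) be a variable type, writing x₁, x₂ for the two Fin 2 variables, t for the Unit variable, and y_{rs} for the matrix variables. In S = MvPolynomial σ ℂ, let I ⊆ S be the ideal generated by X x₁, X x₂, and all X y_{rs}, and set F := X x₁ · X x₂ − X t · det Y, where Y is the m×m matrix with entries X y_{rs}. Then F ∈ I² and F ∉ I³. -/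
open MvPolynomial

theorem Matrix.det_mem_pow_card {R n : Type*} [CommRing R] [Fintype n] [DecidableEq n]
    {J : Ideal R} {M : Matrix n n R} (hM : ∀ i j, M i j ∈ J) :
    M.det ∈ J ^ Fintype.card n := by
  rw [Matrix.det_apply']
  refine Ideal.sum_mem _ fun σ _ => Ideal.mul_mem_left _ _ ?_
  rw [← Finset.card_univ, ← Finset.prod_const]
  exact Ideal.prod_mem_prod fun i _ => hM (σ i) i

theorem Ideal.apply_mem_pow_of_le_comap {R S : Type*} [CommRing R] [CommRing S] (f : R →+* S)
    {I : Ideal R} {J : Ideal S} (hIJ : I ≤ J.comap f) {n : ℕ} {a : R} (ha : a ∈ I ^ n) :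
    f a ∈ J ^ n :=
  Ideal.le_comap_pow f n (Ideal.pow_right_mono hIJ n ha)

theorem Polynomial.X_pow_mem_span_X_pow_iff {R : Type*} [CommRing R] [IsDomain R] {m n : ℕ} :
    (X : Polynomial R) ^ m ∈ Ideal.span {X} ^ n ↔ n ≤ m := by
  rw [Ideal.span_singleton_pow, Ideal.mem_span_singleton, pow_dvd_pow_iff X_ne_zero not_isUnit_X]

/-- The hypersurface `x₁x₂ = t·det(y_{rs})` has multiplicity exactly `2` along the blow-up
center `W = (x₁ = x₂ = 0, y_{rs} = 0 for all r,s)`: its equation lies in `I²` but not in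
`I³`, where `I` is the ideal generated by `x₁, x₂` and all the `y_{rs}`. -/
theorem mult_two_along_center
    (m : ℕ) (hm : 2 ≤ m)
    (I : Ideal (MvPolynomial (Fin 2 ⊕ Unit ⊕ (Fin m × Fin m)) ℂ))
    (hI : I = Ideal.span
      ({X (Sum.inl 0), X (Sum.inl 1)} ∪
        Set.range fun q : Fin m × Fin m =>
          (X (Sum.inr (Sum.inr q)) : MvPolynomial (Fin 2 ⊕ Unit ⊕ (Fin m × Fin m)) ℂ)))
    (F : MvPolynomial (Fin 2 ⊕ Unit ⊕ (Fin m × Fin m)) ℂ)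
    (hF : F = X (Sum.inl 0) * X (Sum.inl 1) -
      X (Sum.inr (Sum.inl ())) *
        (Matrix.of fun r s : Fin m =>
          (X (Sum.inr (Sum.inr (r, s))) :
            MvPolynomial (Fin 2 ⊕ Unit ⊕ (Fin m × Fin m)) ℂ)).det) :
    F ∈ I ^ 2 ∧ F ∉ I ^ 3 := by
  have hx : ∀ i, X (Sum.inl i) ∈ I := fun i => by
    rw [hI]; fin_cases i <;> exact Ideal.subset_span (by simp)
  have hy : ∀ q : Fin m × Fin m, X (Sum.inr (Sum.inr q)) ∈ I := fun q => by
    rw [hI]; exact Ideal.subset_span (Or.inr ⟨q, rfl⟩)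
  subst hF
  constructor
  · have hdet := Matrix.det_mem_pow_card (J := I) fun r s => by simpa using hy (r, s)
    rw [Fintype.card_fin] at hdet
    exact sub_mem (pow_two I ▸ Ideal.mul_mem_mul (hx 0) (hx 1))
      (Ideal.mul_mem_left _ _ (Ideal.pow_le_pow_right hm hdet))
  · -- Setting `t = 0` and every other variable to `X` sends `I` into `(X)` and `F` to `X ^ 2`.
    set ev := (aeval (Sum.elim (fun _ => Polynomial.X) (Sum.elim 0 fun _ => Polynomial.X)) :
      MvPolynomial (Fin 2 ⊕ Unit ⊕ (Fin m × Fin m)) ℂ →ₐ[ℂ] Polynomial ℂ).toRingHom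
    have hIX : I ≤ (Ideal.span {Polynomial.X}).comap ev := by
      rw [hI, Ideal.span_le]
      rintro p ((rfl | rfl) | ⟨q, rfl⟩) <;> simp [ev]
    intro hF3
    have hevF := Ideal.apply_mem_pow_of_le_comap ev hIX hF3
    simp only [ev, AlgHom.toRingHom_eq_coe, RingHom.coe_coe, map_sub, map_mul, aeval_X,
      Sum.elim_inl, Sum.elim_inr, Pi.zero_apply, zero_mul, sub_zero, ← pow_two,
      Polynomial.X_pow_mem_span_X_pow_iff] at hevF
    omega
end
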